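/- arXiv:math/0108206 — 4 statements merged into one kernel-verified Lean document; each statement's English description precedes it below -/
import Mathlib

section
/- Let p be a prime, a ≥ 1, and n = p^a. If c : Fin n → ℤ satisfies c 0 + c 1 + ⋯ + c (n−1) = 1, then the circulant matrix of c is nonsingular, i.e. its determinant is a nonzero integer. -/
/-!
Reduce modulo `p`. A circulant matrix is a linear combination `∑ c g • P g` of pairwise commuting
shift matrices with `P g ^ p ^ a = 1`, so in characteristic `p` the Frobenius identity for
commuting summands gives `circulant c ^ p ^ a = (∑ c g) ^ p ^ a • 1 = 1`. Hence the determinant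
is a unit in `ZMod p`, and in particular the integer determinant is nonzero.
-/

open Matrix

theorem Finset.sum_pow_expChar_pow_of_commute {ι R : Type*} [Semiring R] (p n : ℕ) [ExpChar R p]
    (s : Finset ι) (f : ι → R) (hf : ∀ i ∈ s, ∀ j ∈ s, Commute (f i) (f j)) :
    (∑ i ∈ s, f i) ^ p ^ n = ∑ i ∈ s, f i ^ p ^ n := by
  classical
  induction s using Finset.induction_on with
  | empty => simpa using zero_pow (expChar_pow_pos R p n).ne'
  | insert a s ha ih =>
    have hcomm : Commute (f a) (∑ i ∈ s, f i) :=
      Commute.sum_right _ _ _ fun j hj => hf a (by simp) j (by simp [hj])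
    rw [Finset.sum_insert ha, Finset.sum_insert ha, add_pow_expChar_pow_of_commute p n hcomm,
      ih fun i hi j hj => hf i (by simp [hi]) j (by simp [hj])]

namespace Matrix

variable {R G : Type*} [AddCommGroup G] [Fintype G] [DecidableEq G]

theorem circulant_single_one_pow [Semiring R] (g : G) (k : ℕ) :
    circulant (Pi.single g 1 : G → R) ^ k = circulant (Pi.single (k • g) 1) := by
  induction k with
  | zero => simp
  | succ k ih =>
    rw [pow_succ, ih, circulant_mul, mulVec_single]
    ext i j
    simp [circulant_apply, Pi.single_apply, succ_nsmul, sub_eq_iff_eq_add]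

theorem circulant_eq_sum_smul_circulant_single [Semiring R] (v : G → R) :
    circulant v = ∑ g, v g • circulant (Pi.single g 1) := by
  ext i j
  simp [circulant_apply, Matrix.sum_apply, Pi.single_apply, eq_comm]

theorem circulant_pow_char_pow [CommRing R] (p a : ℕ) [Fact p.Prime] [CharP R p]
    (hG : ∀ g : G, p ^ a • g = 0) (v : G → R) :
    circulant v ^ p ^ a = (∑ g, v g) ^ p ^ a • (1 : Matrix G G R) := by
  rw [circulant_eq_sum_smul_circulant_single, Finset.sum_pow_expChar_pow_of_commute,
    sum_pow_char_pow, Finset.sum_smul]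
  · simp_rw [smul_pow, circulant_single_one_pow, hG, circulant_single_one]
  · intro i _ j _
    simp_rw [← circulant_smul]
    exact circulant_mul_comm _ _

theorem isUnit_circulant_of_sum_eq_one [CommRing R] (p a : ℕ) [Fact p.Prime] [CharP R p]
    (hG : ∀ g : G, p ^ a • g = 0) (v : G → R) (hv : ∑ g, v g = 1) :
    IsUnit (circulant v) := by
  refine IsUnit.of_pow_eq_one ?_ (expChar_pow_pos R p a).ne'
  rw [circulant_pow_char_pow p a hG, hv, one_pow, one_smul]

end Matrix

theorem circulant_det_ne_zero_general (p a : ℕ) (hp : p.Prime)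
    (n : ℕ) (hn : n = p ^ a)
    (c : Fin n → ℤ) (hc : ∑ i, c i = 1) :
    (Matrix.circulant c).det ≠ 0 := by
  subst hn
  have := Fact.mk hp
  have hunit : IsUnit ((circulant c).det : ZMod p) := by
    rw [Int.cast_det, map_circulant]
    refine (isUnit_iff_isUnit_det _).mp (isUnit_circulant_of_sum_eq_one p a (fun g => ?_) _ ?_)
    · simpa using card_nsmul_eq_zero (x := g)
    · exact_mod_cast congrArg (Int.cast : ℤ → ZMod p) hc
  exact fun hdet => by simp [hdet] at hunit

theorem circulant_det_ne_zero (p a : ℕ) (hp : p.Prime) (ha : 1 ≤ a)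
    (n : ℕ) (hn : n = p ^ a)
    (c : Fin n → ℤ) (hc : ∑ i, c i = 1) :
    (Matrix.circulant c).det ≠ 0 :=
  circulant_det_ne_zero_general p a hp n hn c hc
end

section
/- Let p be a prime, a ≥ 1, and n = p^a. Let the group ZMod n act on finite subsets S ⊆ ZMod n by translation, S ↦ S + k. If S is a subset with 0 < |S| < n, then the cardinality of the orbit {S + k : k ∈ ZMod n} of S under this action is divisible by p. -/
open Pointwise

theorem AddAction.prime_dvd_ncard_orbit_of_not_mem_fixedPoints {G α : Type*} [AddGroup G]
    [AddAction G α] {p a : ℕ} (hp : p.Prime) (hG : Nat.card G = p ^ a) {x : α}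
    (hx : x ∉ fixedPoints G α) : p ∣ (orbit G x).ncard := by
  have hdvd : (orbit G x).ncard ∣ p ^ a :=
    index_stabilizer G x ▸ hG ▸ (stabilizer G x).index_dvd_card
  obtain ⟨c, -, hc⟩ := (Nat.dvd_prime_pow hp).1 hdvd
  have hc0 : c ≠ 0 := by
    rintro rfl
    obtain ⟨y, hy⟩ := Set.ncard_eq_one.1 (hc.trans (pow_zero p))
    exact hx (subsingleton_orbit_iff_mem_fixedPoints.1 (hy ▸ Set.subsingleton_singleton))
  exact hc ▸ dvd_pow_self p hc0

theorem Finset.eq_univ_of_forall_vadd_eq {G : Type*} [AddGroup G] [Fintype G] [DecidableEq G]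
    {S : Finset G} (hS : S.Nonempty) (h : ∀ k : G, k +ᵥ S = S) : S = univ := by
  obtain ⟨s, hs⟩ := hS
  refine eq_univ_of_forall fun x => ?_
  rw [← h (x - s)]
  exact mem_vadd_finset.2 ⟨s, hs, sub_add_cancel x s⟩

theorem Finset.setOf_image_add_right_eq_orbit {G : Type*} [AddCommGroup G] [DecidableEq G]
    (S : Finset G) :
    {T : Finset G | ∃ k : G, T = S.image (fun s => s + k)} = AddAction.orbit G S := by
  ext T
  simp only [Set.mem_ofPred_eq, AddAction.mem_orbit_iff, eq_comm (a := T), ← image_vadd,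
    vadd_eq_add, add_comm]

theorem orbit_card_dvd_of_translation_action_general (p a : ℕ) (hp : p.Prime)
    (n : ℕ) (hn : n = p ^ a)
    (S : Finset (ZMod n)) (h1 : 0 < S.card) (h2 : S.card < n) :
    p ∣ ({T : Finset (ZMod n) | ∃ k : ZMod n, T = S.image (fun s => s + k)} : Set (Finset (ZMod n))).ncard := by
  subst hn
  have : NeZero (p ^ a) := ⟨pow_ne_zero a hp.ne_zero⟩
  rw [Finset.setOf_image_add_right_eq_orbit]
  refine AddAction.prime_dvd_ncard_orbit_of_not_mem_fixedPoints hp (Nat.card_zmod _) ?_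
  intro hfixed
  have hS_univ := Finset.eq_univ_of_forall_vadd_eq (Finset.card_pos.1 h1) hfixed
  rw [hS_univ, Finset.card_univ, ZMod.card] at h2
  exact lt_irrefl _ h2

theorem orbit_card_dvd_of_translation_action (p a : ℕ) (hp : p.Prime) (ha : 1 ≤ a)
    (n : ℕ) (hn : n = p ^ a)
    (S : Finset (ZMod n)) (h1 : 0 < S.card) (h2 : S.card < n) :
    p ∣ ({T : Finset (ZMod n) | ∃ k : ZMod n, T = S.image (fun s => s + k)} : Set (Finset (ZMod n))).ncard :=
  orbit_card_dvd_of_translation_action_general p a hp n hn S h1 h2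
end

section
/- Let d ≥ 2 be an integer, m > 1 a real number, s := m^d − (m−1)^d, and a := (m−1)/m. Define x : Fin d → ℝ by x 0 = m^{d−1}/s and x k = m^{k−1}(m−1)^{d−k}/s for 1 ≤ k ≤ d−1. Then the multiset of cyclic differences { x(k+1 mod d) − x k : k ∈ Fin d } equals the multiset consisting of the single value y₀ = −(1 − a^{d−1})/(m(1 − a^d)) together with the d−1 values y_k = a^{k−1}/(m²(1 − a^d)) for k = 1, …, d−1. -/
/-!
Write `b = m - 1` and `X k = m ^ (k - 1) * b ^ (d - k) / s`. Then `x` is `X` on `1, …, d` read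
cyclically (`x 0 = X d`), so the cyclic differences are `X (k + 1) - X k`. Since `m - b = 1`,
for `1 ≤ k ≤ d - 1` this is `m ^ (k - 1) * b ^ (d - 1 - k) / s`, which becomes
`a ^ (d - 1 - k) / (m ^ 2 * (1 - a ^ d))` under `a = b / m` and `1 - a ^ d = s / m ^ d`;
the remaining difference `X 1 - X d = (b ^ (d - 1) - m ^ (d - 1)) / s` is `y₀`.
-/

open Finset

section FinMultiset

variable {α : Type*}

theorem Fin.map_univ_val_succ {n : ℕ} (f : Fin (n + 1) → α) :
    univ.val.map f = f 0 ::ₘ univ.val.map (fun i : Fin n => f i.succ) := by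
  simp [List.ofFn_succ]

theorem Fin.map_univ_val_rev {n : ℕ} (f : Fin n → α) :
    univ.val.map (fun i : Fin n => f i.rev) = univ.val.map f := by
  conv_rhs => rw [← Multiset.map_univ_val_equiv Fin.revPerm, Multiset.map_map]
  rfl

theorem Fin.map_univ_val_val {n : ℕ} (f : ℕ → α) :
    univ.val.map (fun i : Fin n => f i) = (range n).val.map f := by
  rw [Finset.range_val, Multiset.range, ← List.map_coe_finRange_eq_range, ← Multiset.map_coe,
    Multiset.map_map, Fin.univ_val_map, List.ofFn_eq_map]
  rfl

end FinMultiset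

theorem apply_succ_mod_eq {α : Type*} {n : ℕ} {x : Fin (n + 1) → α} {X : ℕ → α}
    (h0 : x 0 = X (n + 1)) (hX : ∀ k : Fin (n + 1), 1 ≤ (k : ℕ) → x k = X k)
    (k : Fin (n + 1)) (hk : ((k : ℕ) + 1) % (n + 1) < n + 1) :
    x ⟨((k : ℕ) + 1) % (n + 1), hk⟩ = X (k + 1) := by
  rcases (Nat.lt_succ_iff.1 k.isLt).lt_or_eq with hlt | heq
  · simp only [Nat.mod_eq_of_lt (Nat.succ_lt_succ hlt)]
    exact hX _ (Nat.le_add_left 1 k)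
  · simp only [heq, Nat.mod_self]
    exact h0

section PowerRatios

variable {K : Type*} [Field K] {m b : K}

theorem div_pow_div_sq_mul_one_sub_div_pow (hm : m ≠ 0) {i j : ℕ}
    (hmb : m ^ (i + j + 2) ≠ b ^ (i + j + 2)) :
    (b / m) ^ j / (m ^ 2 * (1 - (b / m) ^ (i + j + 2))) =
      m ^ i * b ^ j / (m ^ (i + j + 2) - b ^ (i + j + 2)) := by
  rw [div_pow, div_pow, one_sub_div (pow_ne_zero _ hm)]
  field_simp [sub_ne_zero.2 hmb]
  ring

theorem neg_one_sub_div_pow_div_mul_one_sub_div_pow (hm : m ≠ 0) {n : ℕ}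
    (hmb : m ^ (n + 1) ≠ b ^ (n + 1)) :
    -(1 - (b / m) ^ n) / (m * (1 - (b / m) ^ (n + 1))) =
      (b ^ n - m ^ n) / (m ^ (n + 1) - b ^ (n + 1)) := by
  rw [div_pow, div_pow, one_sub_div (pow_ne_zero _ hm), one_sub_div (pow_ne_zero _ hm)]
  field_simp [sub_ne_zero.2 hmb]
  ring

end PowerRatios

theorem cyclic_differences_multiset (d : ℕ) (hd : 2 ≤ d) (m : ℝ) (hm : 1 < m)
    (s a : ℝ) (hs : s = m ^ d - (m - 1) ^ d) (ha : a = (m - 1) / m)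
    (x : Fin d → ℝ)
    (hx0 : x ⟨0, by omega⟩ = m ^ (d - 1) / s)
    (hxk : ∀ k : Fin d, 1 ≤ (k : ℕ) →
      x k = m ^ ((k : ℕ) - 1) * (m - 1) ^ (d - (k : ℕ)) / s) :
    Multiset.map (fun k : Fin d =>
        x ⟨((k : ℕ) + 1) % d, Nat.mod_lt _ (by omega)⟩ - x k) Finset.univ.val =
      (-(1 - a ^ (d - 1)) / (m * (1 - a ^ d))) ::ₘ
        Multiset.map (fun k : ℕ => a ^ k / (m ^ 2 * (1 - a ^ d)))
          (Finset.range (d - 1)).val := by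
  obtain ⟨n, rfl⟩ : ∃ n, d = n + 1 := ⟨d - 1, by omega⟩
  subst hs ha
  have hm0 : m ≠ 0 := by positivity
  have hmb : m ^ (n + 1) ≠ (m - 1) ^ (n + 1) :=
    (pow_lt_pow_left₀ (by linarith) (by linarith) n.succ_ne_zero).ne'
  set X : ℕ → ℝ := fun k =>
    m ^ (k - 1) * (m - 1) ^ (n + 1 - k) / (m ^ (n + 1) - (m - 1) ^ (n + 1))
  have hX0 : x 0 = X (n + 1) := by simpa [X] using hx0
  simp only [apply_succ_mod_eq hX0 hxk]
  rw [Fin.map_univ_val_succ, hX0]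
  simp only [hxk _ (Fin.succ_pos _)]
  rw [Nat.add_sub_cancel, ← Fin.map_univ_val_val, ← Fin.map_univ_val_rev]
  congr 1
  · simp only [X, Fin.val_zero, zero_add, Nat.sub_self, Nat.add_sub_cancel]
    rw [neg_one_sub_div_pow_div_mul_one_sub_div_pow hm0 hmb]
    ring
  · refine Multiset.map_congr rfl fun i _ => ?_
    obtain ⟨k, hk⟩ : ∃ k, n = k + i + 1 := ⟨n - 1 - i, by omega⟩
    have hrev : (i.rev.succ : ℕ) = k + 1 := by simp only [Fin.val_succ, Fin.val_rev]; omega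
    have hn : n + 1 = k + i + 2 := by omega
    simp only [hrev, X, hn, Nat.add_sub_cancel]
    rw [hn] at hmb
    rw [div_pow_div_sq_mul_one_sub_div_pow hm0 hmb, show k + i + 2 - (k + 1 + 1) = i by omega,
      show k + i + 2 - (k + 1) = i + 1 by omega]
    ring
end

section
/- Let Γ be an n×n matrix over a field (e.g. ℚ or ℂ), let d ≥ 1, and suppose Δ := Γ^d − (Γ − I)^d is invertible (note Γ and Γ − I commute). Let u be any vector. Define z : Fin d → vectors by z 0 = −Γ^{d−1} Δ^{−1} u and z k = −Γ^{k−1}(Γ − I)^{d−k} Δ^{−1} u for 1 ≤ k ≤ d−1. Then for every k ∈ Fin d (indices mod d): Γ · (z k) + (I − Γ) · (z (k+1)) equals −u if k = 0 and equals the zero vector otherwise. -/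
theorem cyclic_linear_system_solution {K : Type*} [Field K] (n d : ℕ) (hd : 1 ≤ d)
    (Γ : Matrix (Fin n) (Fin n) K)
    (hΔ : IsUnit (Γ ^ d - (Γ - 1) ^ d))
    (u : Fin n → K) (z : Fin d → Fin n → K)
    (hz0 : z ⟨0, by omega⟩ =
      -(Γ ^ (d - 1) * (Γ ^ d - (Γ - 1) ^ d)⁻¹).mulVec u)
    (hzk : ∀ k : Fin d, 1 ≤ (k : ℕ) →
      z k = -(Γ ^ ((k : ℕ) - 1) * (Γ - 1) ^ (d - (k : ℕ)) *
        (Γ ^ d - (Γ - 1) ^ d)⁻¹).mulVec u) :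
    ∀ k : Fin d,
      Γ.mulVec (z k) + (1 - Γ).mulVec (z ⟨((k : ℕ) + 1) % d, Nat.mod_lt _ (by omega)⟩) =
        if (k : ℕ) = 0 then -u else 0 := by
  have hcomm : Commute Γ (Γ - 1) := (Commute.refl Γ).sub_right (Commute.one_right Γ)
  set Δ := Γ ^ d - (Γ - 1) ^ d with hΔdef
  have hinv : Δ * Δ⁻¹ = 1 :=
    Matrix.mul_nonsing_inv _ ((Matrix.isUnit_iff_isUnit_det Δ).mp hΔ)
  have key : ∀ (M N : Matrix (Fin n) (Fin n) K),
      Γ * -M + (1 - Γ) * -N = -1 →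
      Γ.mulVec (-(M.mulVec u)) + (1 - Γ).mulVec (-(N.mulVec u)) = -u := by
    intro M N h
    rw [← Matrix.neg_mulVec, ← Matrix.neg_mulVec, Matrix.mulVec_mulVec,
      Matrix.mulVec_mulVec, ← Matrix.add_mulVec, h, Matrix.neg_mulVec, Matrix.one_mulVec]
  have key0 : ∀ (M N : Matrix (Fin n) (Fin n) K),
      Γ * -M + (1 - Γ) * -N = 0 →
      Γ.mulVec (-(M.mulVec u)) + (1 - Γ).mulVec (-(N.mulVec u)) = 0 := by
    intro M N h
    rw [← Matrix.neg_mulVec, ← Matrix.neg_mulVec, Matrix.mulVec_mulVec,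
      Matrix.mulVec_mulVec, ← Matrix.add_mulVec, h, Matrix.zero_mulVec]
  rintro ⟨kv, hkv⟩
  simp only [Fin.val_mk]
  rcases eq_or_lt_of_le hd with hd1 | hd2
  · -- d = 1
    have hkv0 : kv = 0 := by omega
    subst hkv0
    subst hd1
    have hΔ1 : Δ = 1 := by rw [hΔdef]; simp
    have hinv1 : Δ⁻¹ = 1 := by rw [hΔ1]; exact inv_one
    have hz : z ⟨(0 + 1) % 1, Nat.mod_lt _ (by omega)⟩ = z ⟨0, hkv⟩ :=
      congrArg z (Subsingleton.elim _ _)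
    rw [hz, hz0, hinv1, if_pos rfl]
    apply key
    simp only [Nat.sub_self, pow_zero, one_mul, mul_one]
    noncomm_ring
  · -- d ≥ 2
    rcases Nat.eq_zero_or_pos kv with hkv0 | hkv1
    · subst hkv0
      have hz : z ⟨(0 + 1) % d, Nat.mod_lt _ (by omega)⟩ = z ⟨1, hd2⟩ :=
        congrArg z (Fin.ext (by simp [Nat.mod_eq_of_lt hd2]))
      rw [hz, hz0, hzk ⟨1, hd2⟩ (by simp), if_pos rfl]
      simp only [Fin.val_mk]
      apply key
      have e1 : Γ * Γ ^ (d - 1) = Γ ^ d := by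
        rw [← pow_succ']; congr 1; omega
      have e2 : (Γ - 1) * (Γ - 1) ^ (d - 1) = (Γ - 1) ^ d := by
        rw [← pow_succ']; congr 1; omega
      calc Γ * -(Γ ^ (d-1) * Δ⁻¹) + (1 - Γ) * -(Γ ^ (1-1) * (Γ-1) ^ (d-1) * Δ⁻¹)
          = -(Γ * Γ ^ (d-1) * Δ⁻¹) + (Γ-1) * (Γ-1) ^ (d-1) * Δ⁻¹ := by
            simp only [Nat.sub_self, pow_zero, one_mul]; noncomm_ring
        _ = -(Γ ^ d * Δ⁻¹) + (Γ-1) ^ d * Δ⁻¹ := by rw [e1, e2]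
        _ = -(Δ * Δ⁻¹) := by rw [hΔdef, sub_mul]; abel
        _ = -1 := by rw [hinv]
    · -- kv ≥ 1
      rcases eq_or_lt_of_le (by omega : kv + 1 ≤ d) with hlast | hmid
      · -- kv = d - 1
        have hz : z ⟨(kv + 1) % d, Nat.mod_lt _ (by omega)⟩ = z ⟨0, by omega⟩ :=
          congrArg z (Fin.ext (by simp [hlast]))
        rw [hz, hz0, hzk ⟨kv, hkv⟩ hkv1, if_neg (by omega : ¬ kv = 0)]
        simp only [Fin.val_mk]
        apply key0
        have hdk : d - kv = 1 := by omega
        have e1 : Γ * Γ ^ (kv - 1) = Γ ^ kv := by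
          rw [← pow_succ']; congr 1; omega
        have e2 : (Γ - 1) * Γ ^ (d - 1) = Γ ^ kv * (Γ - 1) := by
          rw [(hcomm.symm.pow_right (d-1)).eq]; congr 2; omega
        calc Γ * -(Γ ^ (kv-1) * (Γ-1) ^ (d-kv) * Δ⁻¹) + (1 - Γ) * -(Γ ^ (d-1) * Δ⁻¹)
            = -(Γ * Γ ^ (kv-1) * ((Γ-1) ^ (d-kv) * Δ⁻¹)) + (Γ-1) * Γ ^ (d-1) * Δ⁻¹ := by
              noncomm_ring
          _ = -(Γ ^ kv * ((Γ-1) * Δ⁻¹)) + Γ ^ kv * (Γ-1) * Δ⁻¹ := by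
              rw [e1, e2, hdk, pow_one]
          _ = 0 := by rw [← mul_assoc]; exact neg_add_cancel _
      · -- 1 ≤ kv ≤ d - 2
        have hz : z ⟨(kv + 1) % d, Nat.mod_lt _ (by omega)⟩ = z ⟨kv + 1, hmid⟩ :=
          congrArg z (Fin.ext (by simp [Nat.mod_eq_of_lt hmid]))
        rw [hz, hzk ⟨kv, hkv⟩ hkv1, hzk ⟨kv + 1, hmid⟩ (by simp),
          if_neg (by omega : ¬ kv = 0)]
        simp only [Fin.val_mk, Nat.add_sub_cancel]
        apply key0
        have e1 : Γ * Γ ^ (kv - 1) = Γ ^ kv := by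
          rw [← pow_succ']; congr 1; omega
        have e2 : (Γ - 1) * Γ ^ kv = Γ ^ kv * (Γ - 1) := (hcomm.symm.pow_right kv).eq
        have e3 : (Γ - 1) * (Γ - 1) ^ (d - (kv + 1)) = (Γ - 1) ^ (d - kv) := by
          rw [← pow_succ']; congr 1; omega
        calc Γ * -(Γ ^ (kv-1) * (Γ-1) ^ (d-kv) * Δ⁻¹)
              + (1 - Γ) * -(Γ ^ kv * (Γ-1) ^ (d-(kv+1)) * Δ⁻¹)
            = -(Γ * Γ ^ (kv-1) * ((Γ-1) ^ (d-kv) * Δ⁻¹))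
              + (Γ-1) * Γ ^ kv * ((Γ-1) ^ (d-(kv+1)) * Δ⁻¹) := by noncomm_ring
          _ = -(Γ ^ kv * ((Γ-1) ^ (d-kv) * Δ⁻¹))
              + Γ ^ kv * ((Γ-1) * (Γ-1) ^ (d-(kv+1)) * Δ⁻¹) := by
              rw [e1, e2]; simp only [mul_assoc]
          _ = 0 := by rw [e3, ← mul_assoc]; exact neg_add_cancel _
end
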